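/- arXiv:1805.12026 — 3 statements merged into one kernel-verified Lean document; each statement's English description precedes it below -/
import Mathlib

section
/- Let A ⊆ ℝⁿ be closed and nonempty, let x ∈ ℝⁿ, and let f(t) = arctan(‖t‖) · (t / ‖t‖) (with f(0) = 0). Define H = f(A − x) ∪ sphere(0, π/2), where A − x = {a − x : a ∈ A}. Then H is a compact subset of the closed ball of radius π/2, and the projection points of 0 onto H are exactly the points of the form f(t − x) where t is a projection point of x onto A. -/
/-!
`arctanMap` is the radial map `t ↦ arctan ‖t‖ • (t / ‖t‖)`. Its inverse on the open ball of radius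
`π / 2` is the radial map built from `tan`, which is continuous there, so the image of a closed set
is closed relative to the ball; adding the boundary sphere makes it closed, hence compact.
Since `‖arctanMap t‖ = arctan ‖t‖` with `arctan` strictly increasing and below `π / 2`, the points
of `H` nearest to `0` are exactly the images of the points of `A - x` nearest to `0`, and these are
the translates of the points of `A` nearest to `x`.
-/

open Classical in
noncomputable def arctanMap (n : ℕ) (t : EuclideanSpace ℝ (Fin n)) : EuclideanSpace ℝ (Fin n) :=
  if t = 0 then 0 else Real.arctan ‖t‖ • (‖t‖⁻¹ • t)

open Real Topology Metric Set

open Classical in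
noncomputable def radialMap {E : Type*} [NormedAddCommGroup E] [NormedSpace ℝ E] (φ : ℝ → ℝ)
    (t : E) : E :=
  if t = 0 then 0 else φ ‖t‖ • (‖t‖⁻¹ • t)

section RadialMap

variable {E : Type*} [NormedAddCommGroup E] [NormedSpace ℝ E] {φ ψ : ℝ → ℝ}

@[simp]
theorem radialMap_zero (φ : ℝ → ℝ) : radialMap φ (0 : E) = 0 := if_pos rfl

theorem radialMap_of_ne_zero {t : E} (ht : t ≠ 0) : radialMap φ t = φ ‖t‖ • (‖t‖⁻¹ • t) :=
  if_neg ht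

theorem norm_radialMap_of_ne_zero {t : E} (ht : t ≠ 0) : ‖radialMap φ t‖ = |φ ‖t‖| := by
  rw [radialMap_of_ne_zero ht, norm_smul, norm_smul, norm_inv, norm_norm,
    inv_mul_cancel₀ (norm_ne_zero_iff.2 ht), mul_one, Real.norm_eq_abs]

theorem norm_radialMap (h0 : φ 0 = 0) (t : E) : ‖radialMap φ t‖ = |φ ‖t‖| := by
  rcases eq_or_ne t 0 with rfl | ht
  · simp [h0]
  · exact norm_radialMap_of_ne_zero ht

theorem radialMap_radialMap {t : E} (h : t ≠ 0 → 0 < φ ‖t‖ ∧ ψ (φ ‖t‖) = ‖t‖) :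
    radialMap ψ (radialMap φ t) = t := by
  rcases eq_or_ne t 0 with rfl | ht
  · simp
  obtain ⟨hpos, hinv⟩ := h ht
  have hnorm : ‖radialMap φ t‖ = φ ‖t‖ := by
    rw [norm_radialMap_of_ne_zero ht, abs_of_pos hpos]
  have hne : ‖t‖ ≠ 0 := norm_ne_zero_iff.2 ht
  rw [radialMap_of_ne_zero (norm_pos_iff.1 (hnorm ▸ hpos)), hnorm, hinv, radialMap_of_ne_zero ht,
    smul_smul, smul_smul, smul_smul, show ‖t‖ * (φ ‖t‖)⁻¹ * φ ‖t‖ * ‖t‖⁻¹ = 1 by field_simp,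
    one_smul]

theorem continuousAt_radialMap (h0 : φ 0 = 0) {t : E} (hφ : ContinuousAt φ ‖t‖) :
    ContinuousAt (radialMap φ) t := by
  rcases eq_or_ne t 0 with rfl | ht
  · rw [ContinuousAt, radialMap_zero, tendsto_zero_iff_norm_tendsto_zero]
    simp_rw [norm_radialMap h0]
    simpa [h0] using (hφ.tendsto.comp (continuous_norm.tendsto (0 : E))).abs
  · have hev : (fun s : E => φ ‖s‖ • (‖s‖⁻¹ • s)) =ᶠ[𝓝 t] radialMap φ := by
      filter_upwards [eventually_ne_nhds ht] with s hs
      rw [radialMap_of_ne_zero hs]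
    refine ContinuousAt.congr ?_ hev
    exact (hφ.comp continuous_norm.continuousAt).smul
      ((continuous_norm.continuousAt.inv₀ (norm_ne_zero_iff.2 ht)).smul continuousAt_id)

end RadialMap

section ArctanMap

variable {E : Type*} [NormedAddCommGroup E] [NormedSpace ℝ E]

theorem norm_radialMap_arctan (t : E) : ‖radialMap arctan t‖ = arctan ‖t‖ := by
  rw [norm_radialMap arctan_zero, abs_of_nonneg (arctan_nonneg.2 (norm_nonneg t))]

theorem radialMap_arctan_mem_ball (t : E) : radialMap arctan t ∈ ball 0 (π / 2) := by
  rw [mem_ball_zero_iff, norm_radialMap_arctan]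
  exact arctan_lt_pi_div_two _

theorem radialMap_tan_radialMap_arctan (t : E) : radialMap tan (radialMap arctan t) = t :=
  radialMap_radialMap fun ht ↦ ⟨arctan_pos.2 (norm_pos_iff.2 ht), tan_arctan _⟩

theorem radialMap_arctan_radialMap_tan {y : E} (hy : y ∈ ball 0 (π / 2)) :
    radialMap arctan (radialMap tan y) = y := by
  rw [mem_ball_zero_iff] at hy
  have hneg : -(π / 2) < ‖y‖ := by linarith [norm_nonneg y, pi_pos]
  exact radialMap_radialMap fun hy0 ↦
    ⟨tan_pos_of_pos_of_lt_pi_div_two (norm_pos_iff.2 hy0) hy, arctan_tan hneg hy⟩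

theorem continuousOn_radialMap_tan : ContinuousOn (radialMap tan : E → E) (ball 0 (π / 2)) := by
  intro y hy
  rw [mem_ball_zero_iff] at hy
  refine (continuousAt_radialMap tan_zero (continuousAt_tan.2 ?_)).continuousWithinAt
  exact (cos_pos_of_mem_Ioo ⟨by linarith [norm_nonneg y, pi_pos], hy⟩).ne'

theorem image_radialMap_arctan (B : Set E) :
    radialMap arctan '' B = ball 0 (π / 2) ∩ radialMap tan ⁻¹' B := by
  ext y
  constructor
  · rintro ⟨t, ht, rfl⟩
    exact ⟨radialMap_arctan_mem_ball t, by rwa [mem_preimage, radialMap_tan_radialMap_arctan]⟩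
  · rintro ⟨hy, hyB⟩
    exact ⟨_, hyB, radialMap_arctan_radialMap_tan hy⟩

theorem image_radialMap_arctan_union_sphere_subset_closedBall (B : Set E) :
    radialMap arctan '' B ∪ sphere 0 (π / 2) ⊆ closedBall 0 (π / 2) :=
  union_subset (image_subset_iff.2 fun t _ ↦ ball_subset_closedBall (radialMap_arctan_mem_ball t))
    sphere_subset_closedBall

theorem isClosed_image_radialMap_arctan_union_sphere {B : Set E} (hB : IsClosed B) :
    IsClosed (radialMap arctan '' B ∪ sphere 0 (π / 2)) := by
  have hH : radialMap arctan '' B ∪ sphere 0 (π / 2) =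
      closedBall 0 (π / 2) \ (ball 0 (π / 2) ∩ radialMap tan ⁻¹' Bᶜ) := by
    ext y
    rw [image_radialMap_arctan]
    simp only [mem_union, mem_inter_iff, mem_sdiff, mem_preimage, mem_compl_iff, mem_ball_zero_iff,
      mem_closedBall_zero_iff, mem_sphere_zero_iff_norm]
    rcases lt_trichotomy ‖y‖ (π / 2) with h | h | h
    · simp [h, h.ne, h.le]
    · simp [h]
    · simp [h.not_gt, h.ne', h.not_ge]
  rw [hH]
  exact isClosed_closedBall.sdiff
    (continuousOn_radialMap_tan.isOpen_inter_preimage isOpen_ball hB.isOpen_compl)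

end ArctanMap

def nearestPoints {α : Type*} [PseudoMetricSpace α] (x : α) (s : Set α) : Set α :=
  {y | y ∈ s ∧ dist x y = infDist x s}

theorem Isometry.image_nearestPoints {α β : Type*} [PseudoMetricSpace α] [PseudoMetricSpace β]
    {Φ : α → β} (hΦ : Isometry Φ) (x : α) (s : Set α) :
    Φ '' nearestPoints x s = nearestPoints (Φ x) (Φ '' s) := by
  ext y
  constructor
  · rintro ⟨a, ⟨ha, hd⟩, rfl⟩
    exact ⟨mem_image_of_mem Φ ha, by rw [hΦ.dist_eq, infDist_image hΦ, hd]⟩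
  · rintro ⟨⟨a, ha, rfl⟩, hd⟩
    exact ⟨a, ⟨ha, by rwa [hΦ.dist_eq, infDist_image hΦ] at hd⟩, rfl⟩

section NearestPoints

variable {E : Type*} [NormedAddCommGroup E] [NormedSpace ℝ E] [ProperSpace E] {B : Set E}

theorem infDist_zero_image_radialMap_arctan_union_sphere (hB : IsClosed B) (hne : B.Nonempty) :
    infDist 0 (radialMap arctan '' B ∪ sphere 0 (π / 2)) = arctan (infDist 0 B) := by
  obtain ⟨b₀, hb₀, hd⟩ := hB.exists_infDist_eq_dist hne 0
  apply le_antisymm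
  · calc infDist 0 (radialMap arctan '' B ∪ sphere 0 (π / 2))
        ≤ dist 0 (radialMap arctan b₀) := infDist_le_dist_of_mem (Or.inl (mem_image_of_mem _ hb₀))
      _ = arctan (infDist 0 B) := by rw [dist_zero_left, norm_radialMap_arctan, hd, dist_zero_left]
  · refine (le_infDist ((hne.image _).mono subset_union_left)).2 ?_
    rintro y (⟨b, hb, rfl⟩ | hy)
    · rw [dist_zero_left, norm_radialMap_arctan, ← dist_zero_left]
      exact arctan_mono (infDist_le_dist_of_mem hb)
    · rw [dist_zero_left, mem_sphere_zero_iff_norm.1 hy]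
      exact (arctan_lt_pi_div_two _).le

theorem nearestPoints_zero_image_radialMap_arctan_union_sphere (hB : IsClosed B)
    (hne : B.Nonempty) :
    nearestPoints 0 (radialMap arctan '' B ∪ sphere 0 (π / 2)) =
      radialMap arctan '' nearestPoints 0 B := by
  ext y
  simp only [nearestPoints, mem_ofPred_eq, infDist_zero_image_radialMap_arctan_union_sphere hB hne,
    dist_zero_left]
  constructor
  · rintro ⟨⟨b, hb, rfl⟩ | hy, hd⟩
    · rw [norm_radialMap_arctan, arctan_inj] at hd
      exact ⟨b, ⟨hb, hd⟩, rfl⟩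
    · rw [mem_sphere_zero_iff_norm.1 hy] at hd
      exact absurd hd.symm (arctan_lt_pi_div_two _).ne
  · rintro ⟨b, ⟨hb, hd⟩, rfl⟩
    exact ⟨Or.inl (mem_image_of_mem _ hb), by rw [norm_radialMap_arctan, hd]⟩

end NearestPoints

theorem arctanMap_eq_radialMap (n : ℕ) : arctanMap n = radialMap arctan := by
  funext t
  unfold arctanMap radialMap
  congr

theorem arctanMap_projection (n : ℕ) (A : Set (EuclideanSpace ℝ (Fin n)))
    (hAc : IsClosed A) (hA : A.Nonempty) (x : EuclideanSpace ℝ (Fin n)) :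
    let H := arctanMap n '' ((fun a => a - x) '' A) ∪
      Metric.sphere (0 : EuclideanSpace ℝ (Fin n)) (Real.pi / 2)
    IsCompact H ∧ H ⊆ Metric.closedBall 0 (Real.pi / 2) ∧
    {y | y ∈ H ∧ dist 0 y = Metric.infDist 0 H} =
      (fun t => arctanMap n (t - x)) '' {t | t ∈ A ∧ dist x t = Metric.infDist x A} := by
  have hΦ : Isometry (fun a : EuclideanSpace ℝ (Fin n) => a - x) :=
    (IsometryEquiv.subRight x).isometry
  have hB : IsClosed ((fun a => a - x) '' A) := hΦ.isClosedEmbedding.isClosedMap A hAc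
  dsimp only
  rw [arctanMap_eq_radialMap]
  have hsub := image_radialMap_arctan_union_sphere_subset_closedBall ((fun a => a - x) '' A)
  refine ⟨?_, hsub, ?_⟩
  · exact isCompact_of_isClosed_isBounded (isClosed_image_radialMap_arctan_union_sphere hB)
      (isBounded_closedBall.subset hsub)
  · change nearestPoints 0 _ = _ '' nearestPoints x A
    rw [← image_image (radialMap arctan) (· - x), hΦ.image_nearestPoints, sub_self,
      nearestPoints_zero_image_radialMap_arctan_union_sphere hB (hA.image _)]
end

section
/- Let (a_n) be a bounded sequence of real numbers, and define b_n ∈ ℝ² in polar coordinates by b_n = ((1 + 2^(−n)) cos(arctan a_n), (1 + 2^(−n)) sin(arctan a_n)). Let A be the closure of {b_n : n ∈ ℕ}. Then infDist(0, A) = 1, and a point p ∈ A satisfies ‖p‖ = 1 if and only if p = (cos(arctan c), sin(arctan c)) for some cluster point c of the sequence (a_n). In particular, every projection point of 0 onto A yields a cluster point of (a_n). -/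
/-!
Since `‖b n‖ = 1 + 2 ^ (-n)` decreases to `1` without attaining it, `infDist 0 A = 1` and a point
of `A` of norm `1` is not a term of `b`, hence a cluster point of `b`. Pick an ultrafilter on `ℕ`,
finer than `atTop`, along which `b` tends to `p`. As `a` stays in a compact interval, `a` tends
along it to some `c`, which is therefore a cluster point of `a`, and by continuity `b` tends to the
unit vector of angle `arctan c`, which must be `p`.
-/

open Real Filter Topology Set Metric

theorem infDist_range_eq_of_le_dist_of_tendsto {α ι : Type*} [PseudoMetricSpace α] {x : α}
    {u : ι → α} {l : Filter ι} [l.NeBot] {r : ℝ} (hle : ∀ i, r ≤ dist x (u i))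
    (hlim : Tendsto (fun i => dist x (u i)) l (𝓝 r)) : infDist x (range u) = r := by
  have : Nonempty ι := l.nonempty_of_neBot
  refine le_antisymm (ge_of_tendsto' hlim fun i => infDist_le_dist_of_mem (mem_range_self i)) ?_
  exact (le_infDist (range_nonempty u)).2 (forall_mem_range.2 hle)

theorem mapClusterPt_atTop_of_mem_closure_range {X ι : Type*} [TopologicalSpace X] [T1Space X]
    [LinearOrder ι] [LocallyFiniteOrderBot ι] [Nonempty ι] {u : ι → X} {p : X}
    (hp : p ∈ closure (range u)) (hpu : p ∉ range u) : MapClusterPt p atTop u := by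
  refine mapClusterPt_atTop_iff_forall_mem_closure.2 fun i => ?_
  have hhead : IsClosed (u '' Iio i) := ((finite_Iio i).image u).isClosed
  rw [← image_univ, ← Iio_union_Ici, image_union, closure_union, hhead.closure_eq] at hp
  exact hp.resolve_left fun h => hpu (image_subset_range _ _ h)

theorem exists_mapClusterPt_of_mapClusterPt_comp {ι X Y T : Type*} [TopologicalSpace X]
    [T2Space X] [TopologicalSpace Y] [TopologicalSpace T] {l : Filter ι} {K : Set Y}
    (hK : IsCompact K) {a : ι → Y} (ha : ∀ i, a i ∈ K) {t : ι → T} {t₀ : T}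
    (ht : Tendsto t l (𝓝 t₀)) {F : Y × T → X} (hF : Continuous F) {p : X}
    (hp : MapClusterPt p l fun i => F (a i, t i)) :
    ∃ c, MapClusterPt c l a ∧ p = F (c, t₀) := by
  obtain ⟨U, hUl, hUp⟩ := mapClusterPt_iff_ultrafilter.1 hp
  obtain ⟨c, -, hc⟩ := hK.ultrafilter_le_nhds (U.map a) (tendsto_principal.2 (univ_mem' ha))
  refine ⟨c, mapClusterPt_iff_ultrafilter.2 ⟨U, hUl, hc⟩, tendsto_nhds_unique hUp ?_⟩
  exact (hF.tendsto _).comp ((show Tendsto a U (𝓝 c) from hc).prodMk_nhds (ht.mono_left hUl))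

theorem norm_polar_vec (r θ : ℝ) : ‖!₂[r * cos θ, r * sin θ]‖ = |r| := by
  rw [EuclideanSpace.norm_eq, Fin.sum_univ_two]
  simp only [Matrix.cons_val_zero, Matrix.cons_val_one, Real.norm_eq_abs, sq_abs]
  rw [mul_pow, mul_pow, ← mul_add, cos_sq_add_sin_sq, mul_one, sqrt_sq_eq_abs]

theorem tendsto_two_zpow_neg_natCast :
    Tendsto (fun n : ℕ => (2 : ℝ) ^ (-(n : ℤ))) atTop (𝓝 0) := by
  refine (tendsto_pow_atTop_nhds_zero_of_lt_one (by norm_num) (by norm_num : (2 : ℝ)⁻¹ < 1)).congr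
    fun n => ?_
  rw [zpow_neg, zpow_natCast, inv_pow]

open Real in
theorem bwt_via_projection (a : ℕ → ℝ) (hbdd : ∃ M, ∀ n, |a n| ≤ M) :
    let vec : ℝ → ℝ → EuclideanSpace ℝ (Fin 2) := fun u v =>
      (WithLp.equiv 2 (Fin 2 → ℝ)).symm ![u, v]
    let b : ℕ → EuclideanSpace ℝ (Fin 2) := fun n =>
      vec ((1 + (2 : ℝ)^(-(n : ℤ))) * cos (arctan (a n)))
          ((1 + (2 : ℝ)^(-(n : ℤ))) * sin (arctan (a n)))
    let A := closure (Set.range b)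
    Metric.infDist (0 : EuclideanSpace ℝ (Fin 2)) A = 1 ∧
    ∀ p ∈ A, (‖p‖ = 1 ↔
      ∃ c : ℝ, MapClusterPt c Filter.atTop a ∧ p = vec (cos (arctan c)) (sin (arctan c))) := by
  intro vec b A
  set t : ℕ → ℝ := fun n => (2 : ℝ) ^ (-(n : ℤ))
  have ht : Tendsto t atTop (𝓝 0) := tendsto_two_zpow_neg_natCast
  have hnorm_b (n : ℕ) : ‖b n‖ = 1 + t n :=
    (norm_polar_vec _ _).trans (abs_of_pos (by positivity))
  refine ⟨?_, fun p hp => ⟨fun hp1 => ?_, ?_⟩⟩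
  · rw [infDist_closure]
    refine infDist_range_eq_of_le_dist_of_tendsto (l := atTop) (fun n => ?_) ?_
    · simp [hnorm_b, t]
    · simpa [hnorm_b] using ht.const_add 1
  · have hpb : p ∉ range b := by
      rintro ⟨n, rfl⟩
      have : 0 < t n := by positivity
      linarith [hnorm_b n]
    obtain ⟨M, hM⟩ := hbdd
    obtain ⟨c, hc, rfl⟩ := exists_mapClusterPt_of_mapClusterPt_comp
      (isCompact_Icc (a := -M) (b := M)) (fun n => abs_le.1 (hM n)) ht
      (F := fun q => !₂[(1 + q.2) * cos (arctan q.1), (1 + q.2) * sin (arctan q.1)]) (by fun_prop)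
      (mapClusterPt_atTop_of_mem_closure_range hp hpb)
    exact ⟨c, hc, by simp only [add_zero, one_mul]; rfl⟩
  · rintro ⟨c, -, rfl⟩
    show ‖!₂[cos (arctan c), sin (arctan c)]‖ = 1
    simpa using norm_polar_vec 1 (arctan c)
end

section
/- Let A ⊆ [0,1] be closed and nonempty, with [0,1] \ A = ⋃_n I_n for a sequence of open intervals I_n ⊆ ℝ. Define K ⊆ ℝ² (in polar coordinates) as the set of points (r cos α, r sin α) with 1 ≤ r ≤ 2, 0 ≤ α ≤ 1, and for all n, α ∈ I_n implies r ≥ 1 + 2^(−n+1). Then K is closed, infDist(0, K) = 1, and the points of K at distance exactly 1 from the origin are precisely {(cos α, sin α) : α ∈ A}. -/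
/-!
`K` is the image of the parameter set
`S = {(r, α) ∈ [1,2] × [0,1] | α ∈ I n → 1 + 2^(1-n) ≤ r}` under the continuous polar map
`(r, α) ↦ (r cos α, r sin α)`. Each constraint "open condition implies closed condition" is
closed, so `S` is compact and `K` is closed. The polar map has norm `r ≥ 1`, and `r = 1` is
admissible exactly at the angles lying in no `I n`, since every threshold exceeds `1`.
-/

open Real Set

noncomputable def polarToPlane (q : ℝ × ℝ) : EuclideanSpace ℝ (Fin 2) :=
  (WithLp.equiv 2 (Fin 2 → ℝ)).symm ![q.1 * cos q.2, q.1 * sin q.2]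

theorem norm_polarToPlane (q : ℝ × ℝ) : ‖polarToPlane q‖ = |q.1| := by
  rw [EuclideanSpace.norm_eq, ← sqrt_sq_eq_abs]
  congr 1
  simp only [polarToPlane, WithLp.equiv_symm_apply, PiLp.toLp_apply, Fin.sum_univ_two,
    Matrix.cons_val_zero, Matrix.cons_val_one, norm_eq_abs, sq_abs]
  linear_combination q.1 ^ 2 * sin_sq_add_cos_sq q.2

theorem continuous_polarToPlane : Continuous polarToPlane := by
  refine (PiLp.continuous_toLp 2 _).comp (continuous_pi fun i => ?_)
  fin_cases i <;>
    simp only [Fin.zero_eta, Fin.mk_one, Matrix.cons_val_zero, Matrix.cons_val_one] <;> fun_prop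

theorem isClosed_setOf_forall_mem_imp_le {ι : Type*} {U : ι → Set ℝ} (hU : ∀ n, IsOpen (U n))
    (c : ι → ℝ) : IsClosed {q : ℝ × ℝ | ∀ n, q.2 ∈ U n → c n ≤ q.1} := by
  simp only [ofPred_forall]
  exact isClosed_iInter fun n =>
    isClosed_imp ((hU n).preimage continuous_snd) (isClosed_le continuous_const continuous_fst)

def whitneyParams (I : ℕ → Set ℝ) : Set (ℝ × ℝ) :=
  Icc 1 2 ×ˢ Icc 0 1 ∩ {q | ∀ n : ℕ, q.2 ∈ I n → 1 + (2 : ℝ) ^ (-(n : ℤ) + 1) ≤ q.1}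

theorem isCompact_whitneyParams {I : ℕ → Set ℝ} (hI : ∀ n, IsOpen (I n)) :
    IsCompact (whitneyParams I) :=
  (isCompact_Icc.prod isCompact_Icc).inter_right (isClosed_setOf_forall_mem_imp_le hI _)

theorem one_le_fst_of_mem_whitneyParams {I : ℕ → Set ℝ} {q : ℝ × ℝ}
    (hq : q ∈ whitneyParams I) : 1 ≤ q.1 :=
  hq.1.1.1

theorem mk_one_mem_whitneyParams_iff {I : ℕ → Set ℝ} {α : ℝ} :
    ((1, α) ∈ whitneyParams I) ↔ α ∈ Icc 0 1 \ ⋃ n, I n := by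
  simp only [whitneyParams, mem_inter_iff, mem_prod, mem_ofPred_eq, mem_sdiff, mem_iUnion,
    not_exists]
  refine ⟨fun ⟨⟨_, hα⟩, h⟩ => ⟨hα, fun n hn => ?_⟩,
    fun ⟨hα, h⟩ => ⟨⟨by norm_num, hα⟩, fun n hn => (h n hn).elim⟩⟩
  have h2pos : (0 : ℝ) < 2 ^ (-(n : ℤ) + 1) := by positivity
  linarith [h n hn]

theorem one_le_norm_of_mem_polarToPlane_image_whitneyParams {I : ℕ → Set ℝ}
    {p : EuclideanSpace ℝ (Fin 2)} (hp : p ∈ polarToPlane '' whitneyParams I) : 1 ≤ ‖p‖ := by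
  obtain ⟨q, hq, rfl⟩ := hp
  exact norm_polarToPlane q ▸ (one_le_fst_of_mem_whitneyParams hq).trans (le_abs_self _)

theorem polarToPlane_image_whitneyParams_inter_unitSphere (I : ℕ → Set ℝ) :
    {p | p ∈ polarToPlane '' whitneyParams I ∧ ‖p‖ = 1} =
      (fun α => polarToPlane (1, α)) '' (Icc 0 1 \ ⋃ n, I n) := by
  ext p
  constructor
  · rintro ⟨⟨⟨r, α⟩, hq, rfl⟩, hnorm⟩
    have hr : r = 1 := by
      have hr₀ := zero_le_one.trans (one_le_fst_of_mem_whitneyParams hq)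
      rwa [norm_polarToPlane, abs_of_nonneg hr₀] at hnorm
    subst hr
    exact ⟨α, mk_one_mem_whitneyParams_iff.1 hq, rfl⟩
  · rintro ⟨α, hα, rfl⟩
    exact ⟨⟨(1, α), mk_one_mem_whitneyParams_iff.2 hα, rfl⟩, by simp [norm_polarToPlane]⟩

open Real in
theorem whitney_circle_construction (I : ℕ → Set ℝ)
    (hI : ∀ n, ∃ a b : ℝ, I n = Set.Ioo a b)
    (hA : (Set.Icc (0 : ℝ) 1 \ ⋃ n, I n).Nonempty) :
    let vec : ℝ → ℝ → EuclideanSpace ℝ (Fin 2) := fun u v =>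
      (WithLp.equiv 2 (Fin 2 → ℝ)).symm ![u, v]
    let A : Set ℝ := Set.Icc 0 1 \ ⋃ n, I n
    let K : Set (EuclideanSpace ℝ (Fin 2)) :=
      {p | ∃ r α : ℝ, 1 ≤ r ∧ r ≤ 2 ∧ 0 ≤ α ∧ α ≤ 1 ∧
        (∀ n : ℕ, α ∈ I n → 1 + (2 : ℝ)^(-(n : ℤ) + 1) ≤ r) ∧
        p = vec (r * cos α) (r * sin α)}
    IsClosed K ∧ Metric.infDist (0 : EuclideanSpace ℝ (Fin 2)) K = 1 ∧
    {p | p ∈ K ∧ dist (0 : EuclideanSpace ℝ (Fin 2)) p = 1} =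
      (fun α => vec (cos α) (sin α)) '' A := by
  intro vec A K
  have hK : K = polarToPlane '' whitneyParams I := by
    ext p
    simp only [K, whitneyParams, polarToPlane, vec, mem_image, Prod.exists, mem_inter_iff, mem_prod,
      mem_Icc, mem_ofPred_eq]
    grind
  have hsphere : {p | p ∈ K ∧ dist 0 p = 1} = (fun α => vec (cos α) (sin α)) '' A := by
    simpa only [dist_zero_left, hK, polarToPlane, one_mul]
      using polarToPlane_image_whitneyParams_inter_unitSphere I
  obtain ⟨α₀, hα₀⟩ := hA
  have hp₀ : vec (cos α₀) (sin α₀) ∈ {p | p ∈ K ∧ dist 0 p = 1} :=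
    hsphere ▸ mem_image_of_mem _ hα₀
  have hIopen (n : ℕ) : IsOpen (I n) := by
    obtain ⟨a, b, hab⟩ := hI n
    exact hab ▸ isOpen_Ioo
  refine ⟨?_, le_antisymm ?_ ?_, hsphere⟩
  · exact hK ▸ ((isCompact_whitneyParams hIopen).image continuous_polarToPlane).isClosed
  · exact hp₀.2 ▸ Metric.infDist_le_dist_of_mem hp₀.1
  · refine (Metric.le_infDist ⟨_, hp₀.1⟩).2 fun p hp => ?_
    exact dist_zero_left p ▸ one_le_norm_of_mem_polarToPlane_image_whitneyParams (hK ▸ hp)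
end
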